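/- The probability measure μ₂ with density (1/log(4/3)) · 1/((x+1)(x+2)) with respect to Lebesgue measure on [0,1] is invariant under Chan's map τ₂. -/

import Mathlib

open MeasureTheory

/-- Chan's invariant measure: dμ₂(x) = (1/log(4/3)) dx/((x+1)(x+2)) on [0,1]. -/
noncomputable def chanMeasure : Measure ℝ :=
  (volume.restrict (Set.Icc (0:ℝ) 1)).withDensity
    (fun x => ENNReal.ofReal ((Real.log (4 / 3))⁻¹ / ((x + 1) * (x + 2))))

section ChanAux

open Filter Topology

/-- The normalizing constant. -/
noncomputable def chanC : ℝ := (Real.log (4 / 3))⁻¹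

/-- The density of Chan's measure. -/
noncomputable def chanF (x : ℝ) : ℝ := chanC / ((x + 1) * (x + 2))

/-- The inverse branch of Chan's map. -/
noncomputable def chanG (j : ℕ) (y : ℝ) : ℝ := (2 ^ j * (y + 1))⁻¹

/-- Auxiliary telescoping terms. -/
noncomputable def chanA (j : ℕ) (y : ℝ) : ℝ := chanC / ((y + 1) * (1 + 2 ^ j * (y + 1)))

lemma chanC_nonneg : 0 ≤ chanC :=
  inv_nonneg.mpr (Real.log_nonneg (by norm_num))

lemma chan_key (j : ℕ) {y : ℝ} (hy : 0 ≤ y) :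
    |(-(2 ^ j : ℝ)) / ((2 ^ j : ℝ) * (y + 1)) ^ 2| * chanF (chanG j y)
      = chanA j y - chanA (j + 1) y := by
  have hp : (0:ℝ) < 2 ^ j := by positivity
  have hu : (0:ℝ) < y + 1 := by linarith
  have hpu : (0:ℝ) < 2 ^ j * (y + 1) := mul_pos hp hu
  have habs : |(-(2 ^ j : ℝ)) / ((2 ^ j : ℝ) * (y + 1)) ^ 2|
      = (2 ^ j : ℝ) / ((2 ^ j : ℝ) * (y + 1)) ^ 2 := by
    rw [neg_div, abs_neg, abs_of_pos (by positivity)]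
  rw [habs]
  unfold chanF chanG chanA
  have h1 : (0:ℝ) < (2 ^ j * (y + 1))⁻¹ + 1 := by positivity
  have h2 : (0:ℝ) < (2 ^ j * (y + 1))⁻¹ + 2 := by positivity
  have h3 : (0:ℝ) < 1 + 2 ^ j * (y + 1) := by positivity
  have h4 : (0:ℝ) < 1 + 2 ^ (j + 1) * (y + 1) := by positivity
  rw [pow_succ]
  field_simp
  ring

lemma chanA_sub_nonneg (j : ℕ) {y : ℝ} (hy : 0 ≤ y) :
    0 ≤ chanA j y - chanA (j + 1) y := by
  have hu : (0:ℝ) < y + 1 := by linarith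
  rw [sub_nonneg]
  unfold chanA
  gcongr chanC / ((y + 1) * (1 + ?_ * (y + 1))) <;> first
    | exact chanC_nonneg
    | positivity
    | exact pow_le_pow_right₀ (by norm_num) (Nat.le_succ j)

lemma chan_hasNumSum {y : ℝ} (hy : 0 ≤ y) :
    HasSum (fun j : ℕ => chanA j y - chanA (j + 1) y) (chanF y) := by
  have hu : (0:ℝ) < y + 1 := by linarith
  rw [hasSum_iff_tendsto_nat_of_nonneg (fun j => chanA_sub_nonneg j hy)]
  have hps : ∀ n : ℕ, ∑ i ∈ Finset.range n, (chanA i y - chanA (i + 1) y)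
      = chanA 0 y - chanA n y := fun n => Finset.sum_range_sub' (fun i => chanA i y) n
  simp only [hps]
  have hA0 : chanA 0 y = chanF y := by
    unfold chanA chanF; ring_nf
  have htop : Tendsto (fun n : ℕ => (y + 1) * (1 + 2 ^ n * (y + 1))) atTop atTop := by
    apply Tendsto.const_mul_atTop hu
    apply tendsto_atTop_add_const_left
    exact Tendsto.atTop_mul_const hu (tendsto_pow_atTop_atTop_of_one_lt (by norm_num : (1:ℝ) < 2))
  have hAn : Tendsto (fun n : ℕ => chanA n y) atTop (𝓝 0) := by
    unfold chanA
    exact Tendsto.div_atTop tendsto_const_nhds htop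
  have h := (tendsto_const_nhds (x := chanA 0 y) (f := atTop (α := ℕ))).sub hAn
  rw [sub_zero] at h
  rw [← hA0]
  exact h

theorem chan_lintegral_image {s : Set ℝ} {f f' : ℝ → ℝ}
    (hs : MeasurableSet s) (hf' : ∀ x ∈ s, HasDerivWithinAt f (f' x) s x)
    (hf : Set.InjOn f s) (g : ℝ → ENNReal) :
    ∫⁻ x in f '' s, g x = ∫⁻ x in s, ENNReal.ofReal |f' x| * g (f x) := by
  simpa only [ContinuousLinearMap.det_toSpanSingleton] using
    MeasureTheory.lintegral_image_eq_lintegral_abs_det_fderiv_mul volume hs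
      (fun x hx => (hf' x hx).hasFDerivWithinAt) hf g

theorem chan_exists_branch {x : ℝ} (hx0 : 0 < x) (hx1 : x ≤ 1) :
    ∃ j : ℕ, x ∈ Set.Ioc (1 / 2 ^ (j + 1) : ℝ) (1 / 2 ^ j : ℝ) := by
  have h : ∃ n : ℕ, (1 / 2 : ℝ) ^ n < x := exists_pow_lt_of_lt_one hx0 (by norm_num)
  classical
  have hn := Nat.find_spec h
  have hn0 : Nat.find h ≠ 0 := by
    intro h0
    rw [h0, pow_zero] at hn
    linarith
  obtain ⟨m, hm⟩ := Nat.exists_eq_succ_of_ne_zero hn0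
  refine ⟨m, ?_, ?_⟩
  · have := hn
    rw [hm] at this
    calc (1 / 2 ^ (m + 1) : ℝ) = (1 / 2 : ℝ) ^ (m + 1) := by
          rw [div_pow, one_pow]
      _ < x := this
  · have := Nat.find_min h (m.lt_succ_self.trans_eq hm.symm)
    push_neg at this
    calc x ≤ (1 / 2 : ℝ) ^ m := this
      _ = (1 / 2 ^ m : ℝ) := by rw [div_pow, one_pow]

theorem chan_branch_image (E : Set ℝ) (j : ℕ) :
    Set.Ioc (1 / 2 ^ (j + 1) : ℝ) (1 / 2 ^ j : ℝ) ∩ (fun x => 1 / (2 ^ j * x) - 1) ⁻¹' E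
      = chanG j '' (E ∩ Set.Ico 0 1) := by
  have hp : (0:ℝ) < 2 ^ j := by positivity
  ext x
  constructor
  · rintro ⟨⟨hx1, hx2⟩, hxE⟩
    have hx0 : 0 < x := lt_trans (by positivity) hx1
    refine ⟨1 / (2 ^ j * x) - 1, ⟨hxE, ?_, ?_⟩, ?_⟩
    · have : (1:ℝ) ≤ 1 / (2 ^ j * x) := by
        rw [le_div_iff₀ (by positivity)]
        have h2 : (2:ℝ) ^ j * (1 / 2 ^ j) = 1 := by field_simp
        nlinarith
      linarith
    · have : 1 / (2 ^ j * x) < 2 := by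
        rw [div_lt_iff₀ (by positivity)]
        have h2 : (1 / 2 ^ (j + 1) : ℝ) * 2 ^ (j + 1) = 1 := by field_simp
        nlinarith [pow_succ (2:ℝ) j]
      linarith
    · unfold chanG
      have hne : (2:ℝ) ^ j * x ≠ 0 := by positivity
      field_simp
      ring
  · rintro ⟨y, ⟨hyE, hy0, hy1⟩, rfl⟩
    have hu : (1:ℝ) ≤ y + 1 := by linarith
    have hu2 : y + 1 < 2 := by linarith
    have hpu : (0:ℝ) < 2 ^ j * (y + 1) := by positivity
    unfold chanG
    refine ⟨⟨?_, ?_⟩, ?_⟩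
    · rw [one_div, inv_lt_inv₀ (by positivity) hpu, pow_succ]
      nlinarith
    · rw [one_div, inv_le_inv₀ hpu (by positivity)]
      nlinarith
    · show (1:ℝ) / (2 ^ j * (2 ^ j * (y + 1))⁻¹) - 1 ∈ E
      have heq : (1:ℝ) / (2 ^ j * (2 ^ j * (y + 1))⁻¹) - 1 = y := by
        rw [mul_inv, ← mul_assoc,
          mul_inv_cancel₀ (by positivity : (2:ℝ) ^ j ≠ 0), one_mul, one_div, inv_inv]
        ring
      rw [heq]; exact hyE

end ChanAux

/-- The probability measure μ₂ with density (1/log(4/3))·1/((x+1)(x+2)) is invariant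
under Chan's map τ₂ (specified piecewise: τ₂(x) = 1/(2^{k-1}x) - 1 on
(2^{-k}, 2^{-k+1}], τ₂(0) = 0). -/
theorem chanMeasure_invariant (τ₂ : ℝ → ℝ) (hτ₀ : τ₂ 0 = 0)
    (hτ : ∀ k : ℕ, 1 ≤ k → ∀ x : ℝ,
      x ∈ Set.Ioc (1 / 2 ^ k : ℝ) (1 / 2 ^ (k - 1) : ℝ) →
      τ₂ x = 1 / (2 ^ (k - 1) * x) - 1) :
    ∀ E : Set ℝ, MeasurableSet E → E ⊆ Set.Icc (0:ℝ) 1 →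
      chanMeasure (τ₂ ⁻¹' E) = chanMeasure E := by
  intro E hE hE1
  classical
  -- the measure of a measurable set, as an integral of the density
  have hmeasF : ∀ S : Set ℝ, MeasurableSet S →
      chanMeasure S = ∫⁻ x in S ∩ Set.Icc (0:ℝ) 1, ENNReal.ofReal (chanF x) := by
    intro S hS
    rw [chanMeasure, withDensity_apply _ hS, Measure.restrict_restrict hS]
    rfl
  have hnull' : ∀ S : Set ℝ, (volume.restrict (Set.Icc (0:ℝ) 1)) S = 0 → chanMeasure S = 0 :=
    fun S h => withDensity_absolutelyContinuous _ _ h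
  have hnull : ∀ S : Set ℝ, volume S = 0 → chanMeasure S = 0 := fun S h =>
    hnull' S (le_antisymm (le_trans (Measure.restrict_apply_le _ _) h.le) (by simp))
  have h0 : chanMeasure {(0:ℝ)} = 0 := hnull _ (Real.volume_singleton)
  -- notation for the branches
  set E' : Set ℝ := E ∩ Set.Ico 0 1 with hE'def
  have hE'meas : MeasurableSet E' := hE.inter measurableSet_Ico
  set S : ℕ → Set ℝ := fun j =>
    Set.Ioc (1 / 2 ^ (j + 1) : ℝ) (1 / 2 ^ j : ℝ) ∩ (fun x => 1 / (2 ^ j * x) - 1) ⁻¹' E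
    with hSdef
  have hSmeas : ∀ j, MeasurableSet (S j) := by
    intro j
    exact measurableSet_Ioc.inter
      (((measurable_const.div (measurable_id.const_mul _)).sub measurable_const) hE)
  have hSsub : ∀ j, S j ⊆ Set.Icc (0:ℝ) 1 := by
    intro j x hx
    have h1 := hx.1.1
    have h2 := hx.1.2
    constructor
    · have : (0:ℝ) < 1 / 2 ^ (j + 1) := by positivity
      linarith
    · have : (1:ℝ) / 2 ^ j ≤ 1 := by
        rw [div_le_one (by positivity)]
        exact one_le_pow₀ (by norm_num)
      linarith
  have hτval : ∀ j : ℕ, ∀ x ∈ Set.Ioc (1 / 2 ^ (j + 1) : ℝ) (1 / 2 ^ j : ℝ),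
      τ₂ x = 1 / (2 ^ j * x) - 1 := by
    intro j x hx
    have hmem : x ∈ Set.Ioc (1 / 2 ^ (j + 1) : ℝ) (1 / 2 ^ ((j + 1) - 1) : ℝ) := by
      simpa using hx
    have := hτ (j + 1) (Nat.le_add_left 1 j) x hmem
    simpa using this
  have hSsub' : ∀ j, S j ⊆ τ₂ ⁻¹' E := by
    intro j x hx
    show τ₂ x ∈ E
    rw [hτval j x hx.1]
    exact hx.2
  -- decompose the preimage
  have hdecomp : τ₂ ⁻¹' E ∩ Set.Icc (0:ℝ) 1 = (⋃ j, S j) ∪ (τ₂ ⁻¹' E ∩ {0}) := by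
    ext x
    constructor
    · rintro ⟨hxE, hx0, hx1⟩
      rcases eq_or_lt_of_le hx0 with h | h
      · exact Or.inr ⟨hxE, h.symm⟩
      · obtain ⟨j, hj⟩ := chan_exists_branch h hx1
        refine Or.inl (Set.mem_iUnion.mpr ⟨j, hj, ?_⟩)
        show 1 / (2 ^ j * x) - 1 ∈ E
        rw [← hτval j x hj]
        exact hxE
    · rintro (hx | hx)
      · obtain ⟨j, hj⟩ := Set.mem_iUnion.mp hx
        exact ⟨hSsub' j hj, hSsub j hj⟩
      · have hx0 : x = 0 := hx.2
        refine ⟨hx.1, ?_⟩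
        rw [hx0]
        exact ⟨le_refl 0, by norm_num⟩
  -- reduce to the union of branches
  have hL0 : chanMeasure (τ₂ ⁻¹' E) = chanMeasure (⋃ j, S j) := by
    have step1 : chanMeasure (τ₂ ⁻¹' E) = chanMeasure (τ₂ ⁻¹' E ∩ Set.Icc 0 1) := by
      have hmid := measure_inter_add_diff (μ := chanMeasure) (τ₂ ⁻¹' E)
        (measurableSet_Icc (a := (0:ℝ)) (b := 1))
      have hd : chanMeasure (τ₂ ⁻¹' E \ Set.Icc 0 1) = 0 := by
        refine measure_mono_null (Set.diff_subset_diff_left (Set.subset_univ _)) ?_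
        refine hnull' _ ?_
        rw [Set.diff_eq, Set.univ_inter, Measure.restrict_apply measurableSet_Icc.compl]
        simp
      rw [← hmid, hd, add_zero]
    have step2 : chanMeasure ((⋃ j, S j) ∪ (τ₂ ⁻¹' E ∩ {0})) = chanMeasure (⋃ j, S j) := by
      apply le_antisymm
      · calc chanMeasure ((⋃ j, S j) ∪ (τ₂ ⁻¹' E ∩ {0}))
              ≤ chanMeasure (⋃ j, S j) + chanMeasure (τ₂ ⁻¹' E ∩ {0}) := measure_union_le _ _
          _ = chanMeasure (⋃ j, S j) := by
              rw [measure_mono_null Set.inter_subset_right h0, add_zero]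
      · exact measure_mono Set.subset_union_left
    rw [step1, hdecomp, step2]
  -- the branches are pairwise disjoint
  have hdisj : Pairwise (Function.onFun Disjoint S) := by
    intro i j hij
    have hIoc : Disjoint (Set.Ioc (1 / 2 ^ (i + 1) : ℝ) (1 / 2 ^ i : ℝ))
        (Set.Ioc (1 / 2 ^ (j + 1) : ℝ) (1 / 2 ^ j : ℝ)) := by
      rw [Set.Ioc_disjoint_Ioc]
      rcases hij.lt_or_gt with h | h
      · calc min (1 / 2 ^ i : ℝ) (1 / 2 ^ j : ℝ) ≤ (1 / 2 ^ j : ℝ) := min_le_right _ _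
          _ ≤ (1 / 2 ^ (i + 1) : ℝ) := by
              gcongr
              · norm_num
              · exact h
          _ ≤ max (1 / 2 ^ (i + 1) : ℝ) (1 / 2 ^ (j + 1) : ℝ) := le_max_left _ _
      · calc min (1 / 2 ^ i : ℝ) (1 / 2 ^ j : ℝ) ≤ (1 / 2 ^ i : ℝ) := min_le_left _ _
          _ ≤ (1 / 2 ^ (j + 1) : ℝ) := by
              gcongr
              · norm_num
              · exact h
          _ ≤ max (1 / 2 ^ (i + 1) : ℝ) (1 / 2 ^ (j + 1) : ℝ) := le_max_right _ _
    exact Set.disjoint_of_subset Set.inter_subset_left Set.inter_subset_left hIoc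
  -- evaluate each branch by the change of variables formula
  have hbranch : ∀ j, chanMeasure (S j)
      = ∫⁻ y in E', ENNReal.ofReal (chanA j y - chanA (j + 1) y) := by
    intro j
    have hderiv : ∀ y ∈ E',
        HasDerivWithinAt (chanG j) (-(2 ^ j : ℝ) / ((2 ^ j : ℝ) * (y + 1)) ^ 2) E' y := by
      intro y hy
      have hy0 : (0:ℝ) ≤ y := hy.2.1
      have h1 : HasDerivAt (fun y : ℝ => 2 ^ j * (y + 1)) (2 ^ j) y := by
        simpa using ((hasDerivAt_id y).add_const 1).const_mul ((2:ℝ) ^ j)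
      have hne : (2:ℝ) ^ j * (y + 1) ≠ 0 :=
        ne_of_gt (mul_pos (by positivity) (by linarith))
      have h2 := h1.inv hne
      exact h2.hasDerivWithinAt
    have hinj : Set.InjOn (chanG j) E' := by
      intro a ha b hb hab
      have := inv_injective hab
      have h2 : (2:ℝ) ^ j ≠ 0 := by positivity
      have := mul_left_cancel₀ h2 this
      linarith
    have himg : S j = chanG j '' E' := by
      rw [hSdef, hE'def]
      exact chan_branch_image E j
    rw [hmeasF _ (hSmeas j), Set.inter_eq_left.mpr (hSsub j), himg,
      chan_lintegral_image hE'meas hderiv hinj]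
    apply setLIntegral_congr_fun hE'meas
    intro y hy
    dsimp only
    rw [← ENNReal.ofReal_mul (abs_nonneg _), chan_key j hy.2.1]
  -- measurability of the terms
  have hAmeas : ∀ j : ℕ, Measurable fun y : ℝ =>
      ENNReal.ofReal (chanA j y - chanA (j + 1) y) := by
    intro j
    apply Measurable.ennreal_ofReal
    apply Measurable.sub <;>
    · unfold chanA
      exact measurable_const.div
        ((measurable_id.add_const 1).mul
          (((measurable_id.add_const 1).const_mul _).const_add 1))
  -- sum the branches
  have hswap : ∑' j, ∫⁻ y in E', ENNReal.ofReal (chanA j y - chanA (j + 1) y)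
      = ∫⁻ y in E', ∑' j, ENNReal.ofReal (chanA j y - chanA (j + 1) y) :=
    (lintegral_tsum fun j => (hAmeas j).aemeasurable).symm
  have hptws : ∫⁻ y in E', ∑' j, ENNReal.ofReal (chanA j y - chanA (j + 1) y)
      = ∫⁻ y in E', ENNReal.ofReal (chanF y) := by
    apply setLIntegral_congr_fun hE'meas
    intro y hy
    have hy0 : (0:ℝ) ≤ y := hy.2.1
    dsimp only
    rw [← ENNReal.ofReal_tsum_of_nonneg (fun j => chanA_sub_nonneg j hy0)
      (chan_hasNumSum hy0).summable, (chan_hasNumSum hy0).tsum_eq]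
  -- identify the right-hand side
  have hRHS : chanMeasure E = ∫⁻ y in E', ENNReal.ofReal (chanF y) := by
    rw [hmeasF E hE, Set.inter_eq_left.mpr hE1]
    apply setLIntegral_congr
    rw [MeasureTheory.ae_eq_set]
    constructor
    · refine measure_mono_null (fun x hx => ?_) (Real.volume_singleton (a := (1:ℝ)))
      rcases hx with ⟨hxE, hx'⟩
      have hIcc := hE1 hxE
      simp only [hE'def, Set.mem_inter_iff, Set.mem_Ico, not_and, not_lt] at hx'
      have := hx' hxE
      have hx1 : x = 1 := le_antisymm hIcc.2 (this hIcc.1)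
      simp [hx1]
    · rw [Set.diff_eq_empty.mpr Set.inter_subset_left]
      exact measure_empty
  calc chanMeasure (τ₂ ⁻¹' E) = chanMeasure (⋃ j, S j) := hL0
    _ = ∑' j, chanMeasure (S j) := measure_iUnion hdisj hSmeas
    _ = ∑' j, ∫⁻ y in E', ENNReal.ofReal (chanA j y - chanA (j + 1) y) :=
        tsum_congr fun j => hbranch j
    _ = ∫⁻ y in E', ∑' j, ENNReal.ofReal (chanA j y - chanA (j + 1) y) := hswap
    _ = ∫⁻ y in E', ENNReal.ofReal (chanF y) := hptws
    _ = chanMeasure E := hRHS.symm
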